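/- Suppose (s_i) and (λ_i) are sequences of nonnegative reals with λ_i nonincreasing, such that for every f = Σ_i u_i ψ_i with Σ_i u_i²/λ_i = +∞ one also has Σ_i u_i²/s_i = +∞ (i.e., H_{K_s} ⊆ H_K as sets). Then there exists a constant M > 0 with s_i ≤ M λ_i for all i. -/

import Mathlib

/-- If `(sᵢ)` and `(λᵢ)` are nonnegative with `λ` nonincreasing, and every coefficient
sequence `u` with `∑ uᵢ²/sᵢ < ∞` (zero denominators forcing `uᵢ = 0`) also satisfies
`∑ uᵢ²/λᵢ < ∞` (i.e. `H_{K_s} ⊆ H_K`), then there is `M > 0` with `sᵢ ≤ M λᵢ` for all `i`. -/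
theorem stmt_3 (s lam : ℕ → ℝ)
    (hs : ∀ i, 0 ≤ s i) (hl : ∀ i, 0 ≤ lam i) (hanti : Antitone lam)
    (hsub : ∀ u : ℕ → ℝ,
      (∀ i, s i = 0 → u i = 0) → Summable (fun i => u i ^ 2 / s i) →
      (∀ i, lam i = 0 → u i = 0) ∧ Summable (fun i => u i ^ 2 / lam i)) :
    ∃ M > 0, ∀ i, s i ≤ M * lam i := by
  -- Step 1: lam i = 0 implies s i = 0
  have hzero : ∀ i, lam i = 0 → s i = 0 := by
    intro i hli
    by_contra hsi
    set u : ℕ → ℝ := fun j => if j = i then 1 else 0 with hu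
    have h1 : ∀ j, s j = 0 → u j = 0 := by
      intro j hj
      by_cases h : j = i
      · exact absurd (h ▸ hj) hsi
      · simp [hu, h]
    have h2 : Summable (fun j => u j ^ 2 / s j) := by
      apply summable_of_ne_finset_zero (s := {i})
      intro j hj
      simp only [Finset.mem_singleton] at hj
      simp [hu, hj]
    have := (hsub u h1 h2).1 i hli
    simp [hu] at this
  by_cases hcase : ∀ i, 0 < lam i
  · -- main case: all lam positive
    by_contra hM
    push_neg at hM
    have key : ∀ (m : ℕ) (k : ℕ), ∃ i, m < i ∧ ((k : ℝ) + 1) ^ 3 * lam i < s i := by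
      intro m k
      set C : ℝ := ∑ j ∈ Finset.range (m + 1), s j / lam j with hC
      have hCnn : 0 ≤ C := Finset.sum_nonneg fun j _ => div_nonneg (hs j) (hl j)
      set M : ℝ := max C (((k : ℝ) + 1) ^ 3) + 1 with hMdef
      have hMpos : 0 < M := by
        have : (0:ℝ) ≤ max C (((k : ℝ) + 1) ^ 3) := le_max_of_le_left hCnn
        linarith
      obtain ⟨i, hi⟩ := hM M hMpos
      refine ⟨i, ?_, ?_⟩
      · by_contra h
        push_neg at h
        have hmem : i ∈ Finset.range (m + 1) := Finset.mem_range.mpr (Nat.lt_succ_of_le h)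
        have h1 : s i / lam i ≤ C :=
          Finset.single_le_sum (f := fun j => s j / lam j)
            (fun j _ => div_nonneg (hs j) (hl j)) hmem
        have h2 : s i ≤ C * lam i := (div_le_iff₀ (hcase i)).mp h1
        have h3 : C ≤ M := by
          have := le_max_left C (((k : ℝ) + 1) ^ 3); linarith
        nlinarith [hl i]
      · have h3 : ((k : ℝ) + 1) ^ 3 ≤ M := by
          have := le_max_right C (((k : ℝ) + 1) ^ 3); linarith
        nlinarith [hl i]
    obtain ⟨t, ht1, ht2⟩ : ∃ t : ℕ → ℕ, (∀ k, t k < t (k + 1)) ∧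
        ∀ k : ℕ, ((k : ℝ) + 1) ^ 3 * lam (t k) < s (t k) := by
      choose f hf1 hf2 using key
      refine ⟨fun k => Nat.rec (f 0 0) (fun k ih => f ih (k + 1)) k, fun k => hf1 _ _, ?_⟩
      intro k
      cases k with
      | zero => exact hf2 0 0
      | succ n =>
        have := hf2 (Nat.rec (f 0 0) (fun k ih => f ih (k + 1)) n) (n + 1)
        push_cast at this ⊢
        convert this using 3
    have htmono : StrictMono t := strictMono_nat_of_lt_succ ht1
    have hinj : Function.Injective t := htmono.injective
    set u : ℕ → ℝ := Function.extend t (fun k => Real.sqrt (lam (t k) / ((k : ℝ) + 1))) 0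
      with hu
    have hut : ∀ k, u (t k) = Real.sqrt (lam (t k) / ((k : ℝ) + 1)) := fun k =>
      hinj.extend_apply _ _ _
    have huoff : ∀ i, (¬∃ k, t k = i) → u i = 0 := fun i hi =>
      Function.extend_apply' _ _ _ hi
    have hst : ∀ k, 0 < s (t k) := fun k =>
      lt_of_le_of_lt (mul_nonneg (by positivity) (hl _)) (ht2 k)
    have h1 : ∀ i, s i = 0 → u i = 0 := by
      intro i hi
      by_cases h : ∃ k, t k = i
      · obtain ⟨k, rfl⟩ := h
        exact absurd hi (hst k).ne'
      · exact huoff i h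
    have h2 : Summable (fun i => u i ^ 2 / s i) := by
      have hb0 : Summable (fun n : ℕ => 1 / ((n : ℝ) + 1) ^ 2) := by
        have := (summable_nat_add_iff (f := fun n : ℕ => 1 / (n : ℝ) ^ 2) 1).mpr
          (Real.summable_one_div_nat_pow.mpr one_lt_two)
        convert this using 2 with n
        · rfl
        push_cast
        ring
      have hb : Summable (Function.extend t (fun k : ℕ => 1 / ((k : ℝ) + 1) ^ 2) 0) := by
        rw [← hinj.summable_iff (f := Function.extend t (fun k : ℕ => 1 / ((k : ℝ) + 1) ^ 2) 0)]
        · have : (Function.extend t (fun k : ℕ => 1 / ((k : ℝ) + 1) ^ 2) 0) ∘ t =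
              fun k : ℕ => 1 / ((k : ℝ) + 1) ^ 2 := by
            funext k
            exact hinj.extend_apply _ _ _
          rw [this]
          exact hb0
        · intro x hx
          refine Function.extend_apply' _ _ _ ?_
          rintro ⟨k, rfl⟩
          exact hx ⟨k, rfl⟩
      refine Summable.of_nonneg_of_le (fun i => div_nonneg (sq_nonneg _) (hs i)) ?_ hb
      intro i
      by_cases h : ∃ k, t k = i
      · obtain ⟨k, rfl⟩ := h
        rw [hut k, Real.sq_sqrt (div_nonneg (hl _) (by positivity)),
          hinj.extend_apply]
        have hlp := hcase (t k)
        have hsp := hst k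
        have hkey := ht2 k
        rw [div_div, div_le_div_iff₀ (by positivity) (by positivity)]
        have e1 : ((k:ℝ)+1) * (((k:ℝ)+1)^3 * lam (t k)) < ((k:ℝ)+1) * s (t k) :=
          mul_lt_mul_of_pos_left hkey (by positivity)
        nlinarith [mul_nonneg (mul_nonneg hlp.le (sq_nonneg ((k:ℝ)+1)))
          (show (0:ℝ) ≤ (k:ℝ)^2 + 2*k by positivity)]
      · rw [huoff i h, Function.extend_apply' _ _ _ h]
        simp
    obtain ⟨-, h3⟩ := hsub u h1 h2
    have h4 : Summable (fun k => u (t k) ^ 2 / lam (t k)) := h3.comp_injective hinj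
    have h5 : (fun k => u (t k) ^ 2 / lam (t k)) = fun k : ℕ => 1 / ((k : ℝ) + 1) := by
      funext k
      rw [hut k, Real.sq_sqrt (div_nonneg (hl _) (by positivity)), div_div, mul_comm,
        ← div_div, div_self (hcase (t k)).ne', one_div]
    rw [h5] at h4
    have h6 : Summable (fun n : ℕ => 1 / (n : ℝ)) := by
      rw [← summable_nat_add_iff 1]
      convert h4 using 2 with n
      · rfl
      push_cast
      ring
    exact Real.not_summable_one_div_natCast h6
  · -- lam hits zero
    push_neg at hcase
    obtain ⟨n0, hn0⟩ := hcase
    have hn0' : lam n0 = 0 := le_antisymm hn0 (hl n0)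
    set C : ℝ := ∑ j ∈ Finset.range n0, s j / lam j with hC
    have hCnn : 0 ≤ C := Finset.sum_nonneg fun j _ => div_nonneg (hs j) (hl j)
    refine ⟨C + 1, by linarith, ?_⟩
    intro i
    by_cases hi : n0 ≤ i
    · have hli : lam i = 0 := le_antisymm (hn0' ▸ hanti hi) (hl i)
      rw [hli, mul_zero, hzero i hli]
    · push_neg at hi
      by_cases hli : lam i = 0
      · rw [hli, mul_zero, hzero i hli]
      · have hlp : 0 < lam i := (hl i).lt_of_ne' hli
        have hterm : s i / lam i ≤ C :=
          Finset.single_le_sum (f := fun j => s j / lam j)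
            (fun j _ => div_nonneg (hs j) (hl j)) (Finset.mem_range.mpr hi)
        have h2 : s i ≤ C * lam i := (div_le_iff₀ hlp).mp hterm
        nlinarith [hl i]
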